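/- Subspace change detection (detectability, deterministic core): let P_old, P_new, P̂ be n×r basis matrices with sin θ_max(P̂, P_old) ≤ ε. Let B := (I − P̂P̂ᵀ)[ℓ₁,…,ℓ_α] with ℓ_t = P_new a_t, and suppose the Gram matrix satisfies λ_min(Σ_t a_t a_tᵀ) ≥ α λ⁻. Then λ_max(BBᵀ) ≥ α λ⁻ · (sin θ_max(P̂, P_new))². In particular, if sin θ_max(P̂,P_new) ≥ Δ − ε > 0 for Δ := sin θ_max(P_old,P_new) interpreted via the triangle inequality, the statistic exceeds α λ⁻ (Δ − ε)². -/

import Mathlib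

open Matrix BigOperators MeasureTheory

/-- Spectral (operator 2-) norm of a real matrix. -/
noncomputable def specNorm {m n : Type*} [Fintype m] [Fintype n] [DecidableEq n]
    (A : Matrix m n ℝ) : ℝ :=
  ‖LinearMap.toContinuousLinearMap (Matrix.toEuclideanLin A)‖

/-- Euclidean norm of a vector. -/
noncomputable def vecNorm {n : Type*} [Fintype n] (v : n → ℝ) : ℝ :=
  Real.sqrt (∑ i, v i ^ 2)

/-- The selection matrix I_T whose columns are the standard basis vectors indexed by T. -/
def selMat {n : ℕ} (T : Finset (Fin n)) : Matrix (Fin n) {i // i ∈ T} ℝ :=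
  fun i j => if i = (j : Fin n) then 1 else 0

open scoped Matrix.Norms.L2Operator

lemma specNorm_def' {m n : Type*} [Fintype m] [Fintype n] [DecidableEq n]
    (A : Matrix m n ℝ) : specNorm A = ‖A‖ := rfl

lemma specNorm_nonneg {m n : Type*} [Fintype m] [Fintype n] [DecidableEq n]
    (A : Matrix m n ℝ) : 0 ≤ specNorm A := by
  rw [specNorm_def']; exact norm_nonneg _

lemma specNorm_transpose {m n : Type*} [Fintype m] [Fintype n] [DecidableEq n] [DecidableEq m]
    (A : Matrix m n ℝ) : specNorm Aᵀ = specNorm A := by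
  rw [specNorm_def', specNorm_def', ← Matrix.conjTranspose_eq_transpose_of_trivial,
    Matrix.l2_opNorm_conjTranspose]

lemma rayleigh_aux {m : Type*} [Fintype m] [DecidableEq m] [Nonempty m]
    (H : Matrix m m ℝ) (hH : H.IsHermitian) :
    ∃ i, ∀ x : m → ℝ, x ⬝ᵥ (H *ᵥ x) ≤ hH.eigenvalues i * ∑ j, x j ^ 2 := by
  obtain ⟨i, hi⟩ := Finite.exists_max hH.eigenvalues
  refine ⟨i, fun x => ?_⟩
  have hU := (Matrix.mem_unitaryGroup_iff).mp (Matrix.IsHermitian.eigenvectorUnitary hH).2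
  set U := (Matrix.IsHermitian.eigenvectorUnitary hH : Matrix m m ℝ) with hUdef
  have hstar : star U = Uᵀ := U.conjTranspose_eq_transpose_of_trivial ▸ rfl
  set y := Uᵀ *ᵥ x with hy
  have hdiag : (RCLike.ofReal ∘ hH.eigenvalues : m → ℝ) = hH.eigenvalues := by
    funext j; simp [RCLike.ofReal]
  have hspec : H = U * Matrix.diagonal hH.eigenvalues * Uᵀ := by
    conv_lhs => rw [hH.spectral_theorem]
    rw [Unitary.conjStarAlgAut_apply, hstar, hdiag]
  have hxy : x ⬝ᵥ (H *ᵥ x) = y ⬝ᵥ (Matrix.diagonal hH.eigenvalues *ᵥ y) := by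
    conv_lhs => rw [hspec]
    rw [← Matrix.mulVec_mulVec, ← Matrix.mulVec_mulVec, Matrix.dotProduct_mulVec x U,
      ← Matrix.mulVec_transpose]
  have hyy : y ⬝ᵥ y = x ⬝ᵥ x := by
    rw [hy]
    nth_rewrite 1 [Matrix.mulVec_transpose]
    rw [← Matrix.dotProduct_mulVec, Matrix.mulVec_mulVec, ← hstar, hU, Matrix.one_mulVec]
  have hsum : y ⬝ᵥ (Matrix.diagonal hH.eigenvalues *ᵥ y) = ∑ j, hH.eigenvalues j * y j ^ 2 := by
    simp only [dotProduct, Matrix.mulVec_diagonal]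
    exact Finset.sum_congr rfl fun j _ => by ring
  calc x ⬝ᵥ (H *ᵥ x) = ∑ j, hH.eigenvalues j * y j ^ 2 := by rw [hxy, hsum]
    _ ≤ ∑ j, hH.eigenvalues i * y j ^ 2 :=
        Finset.sum_le_sum fun j _ => mul_le_mul_of_nonneg_right (hi j) (sq_nonneg _)
    _ = hH.eigenvalues i * (y ⬝ᵥ y) := by rw [← Finset.mul_sum]; simp [dotProduct, pow_two]
    _ = hH.eigenvalues i * ∑ j, x j ^ 2 := by rw [hyy]; simp [dotProduct, pow_two]

lemma euclid_norm_eq {n : ℕ} (v : Fin n → ℝ) :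
    ‖(WithLp.equiv 2 (Fin n → ℝ)).symm v‖ = Real.sqrt (∑ j, v j ^ 2) := by
  rw [EuclideanSpace.norm_eq]
  congr 1
  exact Finset.sum_congr rfl fun j _ => by simp [Real.norm_eq_abs, sq_abs]

/-- Subspace change detection: detectability (deterministic core). -/
theorem detection_detectability {n r α : ℕ} (hn : 0 < n)
    (Pold Pnew Ph : Matrix (Fin n) (Fin r) ℝ)
    (hPold : Poldᵀ * Pold = 1) (hPnew : Pnewᵀ * Pnew = 1) (hPh : Phᵀ * Ph = 1)
    (ε lam : ℝ) (hε : specNorm ((1 - Ph * Phᵀ) * Pold) ≤ ε)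
    (a : Fin α → Fin r → ℝ)
    (hmin : ∀ x : Fin r → ℝ,
      (α : ℝ) * lam * (∑ i, x i ^ 2) ≤ x ⬝ᵥ ((∑ t, vecMulVec (a t) (a t)) *ᵥ x))
    (hH : (((1 - Ph * Phᵀ) * Pnew * Matrix.of (fun i t => a t i)) *
           ((1 - Ph * Phᵀ) * Pnew * Matrix.of (fun i t => a t i))ᵀ).IsHermitian) :
    (∃ i, (α : ℝ) * lam * specNorm ((1 - Ph * Phᵀ) * Pnew) ^ 2 ≤ hH.eigenvalues i) ∧
    ∀ Δ : ℝ, Δ = specNorm ((1 - Pold * Poldᵀ) * Pnew) → 0 < Δ - ε →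
      Δ - ε ≤ specNorm ((1 - Ph * Phᵀ) * Pnew) →
      ∃ i, (α : ℝ) * lam * (Δ - ε) ^ 2 ≤ hH.eigenvalues i := by
  classical
  haveI : Nonempty (Fin n) := ⟨⟨0, hn⟩⟩
  set M : Matrix (Fin n) (Fin r) ℝ := (1 - Ph * Phᵀ) * Pnew with hM
  set A : Matrix (Fin r) (Fin α) ℝ := Matrix.of (fun i t => a t i) with hA
  have hAAt : A * Aᵀ = ∑ t, vecMulVec (a t) (a t) := by
    ext i j
    simp [Matrix.mul_apply, Matrix.vecMulVec_apply, Matrix.sum_apply, hA]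
  have key : ∀ x : Fin n → ℝ,
      (α : ℝ) * lam * (∑ j, (Mᵀ *ᵥ x) j ^ 2) ≤ x ⬝ᵥ (((M * A) * (M * A)ᵀ) *ᵥ x) := by
    intro x
    have h1 : x ⬝ᵥ (((M * A) * (M * A)ᵀ) *ᵥ x)
        = (Mᵀ *ᵥ x) ⬝ᵥ ((A * Aᵀ) *ᵥ (Mᵀ *ᵥ x)) := by
      rw [Matrix.transpose_mul]
      rw [show M * A * (Aᵀ * Mᵀ) = M * ((A * Aᵀ) * Mᵀ) by simp only [Matrix.mul_assoc]]
      rw [← Matrix.mulVec_mulVec, Matrix.dotProduct_mulVec x M, ← Matrix.mulVec_transpose,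
        ← Matrix.mulVec_mulVec]
    rw [h1, hAAt]
    exact hmin _
  obtain ⟨i, hi⟩ := rayleigh_aux _ hH
  have hub : ∀ x : Fin n → ℝ,
      (α : ℝ) * lam * (∑ j, (Mᵀ *ᵥ x) j ^ 2) ≤ hH.eigenvalues i * ∑ j, x j ^ 2 :=
    fun x => (key x).trans (hi x)
  have hμ0 : 0 ≤ hH.eigenvalues i := by
    have hps : ((M * A) * (M * A)ᵀ).PosSemidef := by
      rw [← Matrix.conjTranspose_eq_transpose_of_trivial]
      exact Matrix.posSemidef_self_mul_conjTranspose _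
    exact hps.eigenvalues_nonneg i
  have main : (α : ℝ) * lam * specNorm M ^ 2 ≤ hH.eigenvalues i := by
    rcases le_or_gt ((α : ℝ) * lam) 0 with hc | hc
    · exact le_trans (mul_nonpos_of_nonpos_of_nonneg hc (sq_nonneg _)) hμ0
    · have hdnn : 0 ≤ hH.eigenvalues i / ((α : ℝ) * lam) := div_nonneg hμ0 hc.le
      have hMt : specNorm Mᵀ ≤ Real.sqrt (hH.eigenvalues i / ((α : ℝ) * lam)) := by
        rw [specNorm]
        apply ContinuousLinearMap.opNorm_le_bound _ (Real.sqrt_nonneg _)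
        intro x
        set v : Fin n → ℝ := WithLp.equiv 2 (Fin n → ℝ) x with hv
        have hxapp : (LinearMap.toContinuousLinearMap (Matrix.toEuclideanLin Mᵀ)) x
            = (WithLp.equiv 2 (Fin r → ℝ)).symm (Mᵀ *ᵥ v) := rfl
        have hxn : ‖x‖ = Real.sqrt (∑ j, v j ^ 2) := by
          rw [show x = (WithLp.equiv 2 (Fin n → ℝ)).symm v from rfl]
          exact euclid_norm_eq v
        rw [hxapp, euclid_norm_eq, hxn, ← Real.sqrt_mul hdnn]
        apply Real.sqrt_le_sqrt
        rw [div_mul_eq_mul_div, le_div_iff₀ hc]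
        linarith [hub v]
      have hMle : specNorm M ≤ Real.sqrt (hH.eigenvalues i / ((α : ℝ) * lam)) :=
        (specNorm_transpose M) ▸ hMt
      have h2 : specNorm M ^ 2 ≤ hH.eigenvalues i / ((α : ℝ) * lam) :=
        le_trans (pow_le_pow_left₀ (specNorm_nonneg M) hMle 2) (le_of_eq (Real.sq_sqrt hdnn))
      calc (α : ℝ) * lam * specNorm M ^ 2
          ≤ (α : ℝ) * lam * (hH.eigenvalues i / ((α : ℝ) * lam)) :=
            mul_le_mul_of_nonneg_left h2 hc.le
        _ = hH.eigenvalues i := by rw [mul_comm]; exact div_mul_cancel₀ _ hc.ne'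
  refine ⟨⟨i, main⟩, fun Δ _ hpos hle => ⟨i, ?_⟩⟩
  rcases le_or_gt ((α : ℝ) * lam) 0 with hc | hc
  · exact le_trans (mul_nonpos_of_nonpos_of_nonneg hc (sq_nonneg _)) hμ0
  · have h2 : (Δ - ε) ^ 2 ≤ specNorm M ^ 2 := pow_le_pow_left₀ hpos.le hle 2
    exact le_trans (mul_le_mul_of_nonneg_left h2 hc.le) main
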